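/- Let X be a Banach space, let H_n ⊂ B_{X*} be an increasing sequence of subsets of the dual unit ball, and let (a_n)_{n∈ℕ} be a decreasing sequence of real numbers converging to 1. Set H = ⋃_{n=1}^∞ H_n and F = ± ⋃_{n=1}^∞ a_n (H_n \ H_{n-1}) (where H_0 = ∅, and ±A denotes A ∪ (−A)). If each H_n has property (*), and sup{|h(x)| : h ∈ H} < sup{f(x) : f ∈ F} whenever x ∈ X is non-zero, then F has property (*). -/

import Mathlib

open NormedSpace Filter Set Topology Pointwise

noncomputable section

/-- `g` is a weak-* limit point of `F`: every weak-* neighbourhood of `g`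
contains infinitely many points of `F`. -/
def IsWeakStarLimitPoint {X : Type*} [NormedAddCommGroup X] [NormedSpace ℝ X]
    (F : Set (StrongDual ℝ X)) (g : StrongDual ℝ X) : Prop :=
  ∀ U : Set (WeakDual ℝ X), IsOpen U → StrongDual.toWeakDual g ∈ U →
    {f : StrongDual ℝ X | f ∈ F ∧ StrongDual.toWeakDual f ∈ U}.Infinite

/-- Property (*) of a set of functionals. -/
def PropertyStar {X : Type*} [NormedAddCommGroup X] [NormedSpace ℝ X]
    (F : Set (StrongDual ℝ X)) : Prop :=
  ∀ g : StrongDual ℝ X, IsWeakStarLimitPoint F g →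
    ∀ x : X, sSup ((fun f : StrongDual ℝ X => f x) '' F) = 1 → g x < 1

/-! A weak-* limit point `g` of `F = ⋃ₙ ±aₙ(Hₙ \ Hₙ₋₁)` is either a limit point of a single
layer `±aₙ(Hₙ \ Hₙ₋₁)`, or of every tail `⋃_{n ≥ N}` of layers.

In the first case `g = ±aₙ g'` with `g'` a limit point of `Hₙ`. Every `h ∈ Hₙ` lies in a layer of
index `m ≤ n`, so `aₙ |h x| ≤ aₘ |h x| ≤ 1`, and property (*) of `Hₙ`, applied at `±x`, gives
`|g' x| < 1 / aₙ`.

In the second case `g x ≤ a_N · sup_{h ∈ H} |h x|` for every `N`, so letting `a_N → 1` gives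
`g x ≤ sup_{h ∈ H} |h x| < 1`. -/

section LimitPoint

variable {X : Type*} [NormedAddCommGroup X] [NormedSpace ℝ X] {S T : Set (StrongDual ℝ X)}
  {g : StrongDual ℝ X}

namespace IsWeakStarLimitPoint

lemma mono (hST : S ⊆ T) (h : IsWeakStarLimitPoint S g) : IsWeakStarLimitPoint T g :=
  fun U hU hgU => (h U hU hgU).mono fun _ hf => ⟨hST hf.1, hf.2⟩

lemma nonempty (h : IsWeakStarLimitPoint S g) : S.Nonempty :=
  let ⟨f, hf, _⟩ := (h univ isOpen_univ (mem_univ _)).nonempty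
  ⟨f, hf⟩

lemma union (h : IsWeakStarLimitPoint (S ∪ T) g) :
    IsWeakStarLimitPoint S g ∨ IsWeakStarLimitPoint T g := by
  by_contra! hne
  simp only [IsWeakStarLimitPoint, not_forall, Set.not_infinite] at hne
  obtain ⟨⟨U, hU, hgU, hSU⟩, ⟨V, hV, hgV, hTV⟩⟩ := hne
  refine h (U ∩ V) (hU.inter hV) ⟨hgU, hgV⟩ ((hSU.union hTV).subset ?_)
  rintro f ⟨hf | hf, hfU, hfV⟩
  exacts [Or.inl ⟨hf, hfU⟩, Or.inr ⟨hf, hfV⟩]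

lemma of_smul {c : ℝ} (hc : c ≠ 0) (h : IsWeakStarLimitPoint (c • S) g) :
    IsWeakStarLimitPoint S (c⁻¹ • g) := by
  intro U hU hgU
  have hcont : Continuous fun φ : WeakDual ℝ X => c⁻¹ • φ := continuous_const_smul _
  refine ((h _ (hU.preimage hcont) hgU).image
    (smul_right_injective _ (inv_ne_zero hc)).injOn).mono ?_
  rintro _ ⟨f, ⟨hf, hfU⟩, rfl⟩
  exact ⟨(mem_smul_set_iff_inv_smul_mem₀ hc _ _).mp hf, hfU⟩

lemma of_neg (h : IsWeakStarLimitPoint (-S) g) : IsWeakStarLimitPoint S (-g) := by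
  intro U hU hgU
  refine ((h _ (hU.preimage continuous_neg) hgU).image neg_injective.injOn).mono ?_
  rintro _ ⟨f, ⟨hf, hfU⟩, rfl⟩
  exact ⟨hf, hfU⟩

lemma apply_le (h : IsWeakStarLimitPoint S g) (y : X) {b : ℝ} (hb : ∀ f ∈ S, f y ≤ b) :
    g y ≤ b := by
  by_contra! hgy
  obtain ⟨f, hfS, hfy⟩ := (h {φ | b < φ y} (isOpen_lt continuous_const
    (WeakDual.eval_continuous y)) hgy).nonempty
  exact (hb f hfS).not_gt hfy

lemma iUnion_add {P : ℕ → Set (StrongDual ℝ X)} (h : IsWeakStarLimitPoint (⋃ n, P n) g)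
    (hP : ∀ n, ¬ IsWeakStarLimitPoint (P n) g) (N : ℕ) :
    IsWeakStarLimitPoint (⋃ k, P (N + k)) g := by
  induction N with
  | zero => simpa using h
  | succ N ih =>
    rw [← union_iUnion_nat_succ] at ih
    simpa [add_assoc, add_comm 1] using ih.union.resolve_left (hP _)

end IsWeakStarLimitPoint

namespace PropertyStar

lemma apply_lt (hS : PropertyStar S) (hg : IsWeakStarLimitPoint S g) {y : X} {b : ℝ}
    (hb : 0 < b) (hbound : ∀ f ∈ S, f y ≤ b) : g y < b := by
  set u := sSup ((fun f : StrongDual ℝ X => f y) '' S)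
  have hub : u ≤ b := csSup_le (hg.nonempty.image _) (forall_mem_image.2 hbound)
  have hle : ∀ f ∈ S, f y ≤ u := fun f hf => le_csSup ⟨b, forall_mem_image.2 hbound⟩ ⟨f, hf, rfl⟩
  rcases le_or_gt u 0 with hu | hu
  · linarith [hg.apply_le y hle]
  · -- Property (*) applies at `y / u`, where the supremum over `S` is exactly 1.
    have hsup : sSup ((fun f : StrongDual ℝ X => f (u⁻¹ • y)) '' S) = 1 := by
      have himage : (fun f : StrongDual ℝ X => f (u⁻¹ • y)) '' S =
          u⁻¹ • (fun f : StrongDual ℝ X => f y) '' S := by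
        rw [← image_smul, image_image]
        simp only [map_smul]
      rw [himage, Real.sSup_smul_of_nonneg (inv_nonneg.2 hu.le), smul_eq_mul,
        inv_mul_cancel₀ hu.ne']
    have := hS g hg _ hsup
    rw [map_smul, smul_eq_mul, inv_mul_lt_iff₀ hu, mul_one] at this
    linarith

lemma abs_apply_lt (hS : PropertyStar S) (hg : IsWeakStarLimitPoint S g) {y : X} {b : ℝ}
    (hb : 0 < b) (hbound : ∀ f ∈ S, |f y| ≤ b) : |g y| < b := by
  refine abs_lt.2 ⟨?_, hS.apply_lt hg hb fun f hf => (abs_le.1 (hbound f hf)).2⟩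
  have := hS.apply_lt hg (y := -y) hb fun f hf => by
    simp only [map_neg]
    linarith [(abs_le.1 (hbound f hf)).1]
  simp only [map_neg] at this
  linarith

end PropertyStar

end LimitPoint

lemma exists_mem_diff_pred {α : Type*} {H : ℕ → Set α} (hH0 : H 0 = ∅) {n : ℕ} {x : α}
    (hx : x ∈ H n) : ∃ m, 1 ≤ m ∧ m ≤ n ∧ x ∈ H m \ H (m - 1) := by
  classical
  have hex : ∃ k, x ∈ H k := ⟨n, hx⟩
  have hpos : 1 ≤ Nat.find hex :=
    Nat.one_le_iff_ne_zero.2 fun h0 => by simpa [h0, hH0] using Nat.find_spec hex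
  exact ⟨Nat.find hex, hpos, Nat.find_min' hex hx, Nat.find_spec hex,
    Nat.find_min hex (Nat.sub_lt hpos one_pos)⟩

lemma one_le_of_tendsto_of_antitone {a : ℕ → ℝ} (hadec : ∀ m n : ℕ, 1 ≤ m → m ≤ n → a n ≤ a m)
    (halim : Tendsto a atTop (𝓝 1)) {m : ℕ} (hm : 1 ≤ m) : 1 ≤ a m :=
  le_of_tendsto halim (eventually_atTop.2 ⟨m, fun _ hk => hadec m _ hm hk⟩)

section Layer

variable {E : Type*} [AddCommGroup E] [Module ℝ E] (a : ℕ → ℝ) (H : ℕ → Set E)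

def layer (n : ℕ) : Set E :=
  a n • (H n \ H (n - 1)) ∪ -(a n • (H n \ H (n - 1)))

lemma iUnion_layer :
    ⋃ n, layer a H n = (⋃ n, a n • (H n \ H (n - 1))) ∪ -(⋃ n, a n • (H n \ H (n - 1))) := by
  simp only [layer, iUnion_union_distrib, iUnion_neg]

@[simp]
lemma layer_zero : layer a H 0 = ∅ := by
  simp [layer]

variable {a H}

lemma smul_mem_layer {n : ℕ} {h : E} (hh : h ∈ H n \ H (n - 1)) : a n • h ∈ layer a H n :=
  Or.inl (smul_mem_smul_set hh)

lemma neg_mem_layer {n : ℕ} {f : E} (hf : f ∈ layer a H n) : -f ∈ layer a H n := by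
  rcases hf with hf | hf
  exacts [Or.inr (by simpa using hf), Or.inl hf]

lemma neg_mem_iUnion_layer {f : E} (hf : f ∈ ⋃ n, layer a H n) : -f ∈ ⋃ n, layer a H n :=
  let ⟨n, hn⟩ := mem_iUnion.1 hf
  mem_iUnion.2 ⟨n, neg_mem_layer hn⟩

end Layer

section Dual

variable {X : Type*} [NormedAddCommGroup X] [NormedSpace ℝ X] {a : ℕ → ℝ}
  {H : ℕ → Set (StrongDual ℝ X)} {n : ℕ} {g : StrongDual ℝ X} {x : X}

lemma exists_abs_apply_eq_of_mem_layer {f : StrongDual ℝ X} (hf : f ∈ layer a H n) :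
    ∃ h ∈ H n \ H (n - 1), ∀ y, |f y| = |a n| * |h y| := by
  rcases hf with ⟨h, hh, rfl⟩ | ⟨h, hh, hfh⟩
  · exact ⟨h, hh, fun y => by simp [abs_mul]⟩
  · exact ⟨h, hh, fun y => by
      rw [← abs_neg, ← neg_apply, ← hfh]
      simp [abs_mul]⟩

lemma IsWeakStarLimitPoint.exists_of_layer (hg : IsWeakStarLimitPoint (layer a H n) g)
    (ha : a n ≠ 0) :
    ∃ g', IsWeakStarLimitPoint (H n) g' ∧ ∀ y, |g y| = |a n| * |g' y| := by
  have hdiff : H n \ H (n - 1) ⊆ H n := sdiff_subset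
  rcases hg.union with hg | hg
  · refine ⟨(a n)⁻¹ • g, (hg.of_smul ha).mono hdiff, fun y => ?_⟩
    simp [abs_mul, abs_inv, ha]
  · refine ⟨(a n)⁻¹ • -g, (hg.of_neg.of_smul ha).mono hdiff, fun y => ?_⟩
    simp [abs_mul, abs_inv, ha]

lemma abs_apply_le_one_of_sSup_eq_one {S : Set (StrongDual ℝ X)} (hneg : ∀ f ∈ S, -f ∈ S)
    (hx : sSup ((fun f : StrongDual ℝ X => f x) '' S) = 1) {f : StrongDual ℝ X} (hf : f ∈ S) :
    |f x| ≤ 1 := by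
  have hbdd : BddAbove ((fun f : StrongDual ℝ X => f x) '' S) := by
    by_contra h
    simp [Real.sSup_of_not_bddAbove h] at hx
  have hle : ∀ f ∈ S, f x ≤ 1 := fun f hf => hx ▸ le_csSup hbdd (mem_image_of_mem _ hf)
  exact abs_le.2 ⟨by simpa [neg_le] using hle _ (hneg f hf), hle f hf⟩

lemma apply_le_of_forall_not_isWeakStarLimitPoint_layer
    (hadec : ∀ m n : ℕ, 1 ≤ m → m ≤ n → a n ≤ a m) (halim : Tendsto a atTop (𝓝 1))
    (hg : IsWeakStarLimitPoint (⋃ n, layer a H n) g)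
    (hP : ∀ n, ¬ IsWeakStarLimitPoint (layer a H n) g) {s : ℝ}
    (hs : ∀ n, ∀ h ∈ H n, |h x| ≤ s) : g x ≤ s := by
  have hN : ∀ N, 1 ≤ N → g x ≤ a N * s := fun N hN =>
    (hg.iUnion_add hP N).apply_le x fun f hf => by
      obtain ⟨k, hk⟩ := mem_iUnion.1 hf
      obtain ⟨h, hh, habs⟩ := exists_abs_apply_eq_of_mem_layer hk
      have hNk := N.le_add_right k
      have ha := one_le_of_tendsto_of_antitone hadec halim (hN.trans hNk)
      calc f x ≤ |f x| := le_abs_self _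
        _ = a (N + k) * |h x| := by rw [habs x, abs_of_nonneg (zero_le_one.trans ha)]
        _ ≤ a N * s := mul_le_mul (hadec N _ hN hNk) (hs _ h hh.1) (abs_nonneg _)
          (zero_le_one.trans (one_le_of_tendsto_of_antitone hadec halim hN))
  simpa using ge_of_tendsto (halim.mul_const s) (eventually_atTop.2 ⟨1, hN⟩)

variable (hH0 : H 0 = ∅) (hadec : ∀ m n : ℕ, 1 ≤ m → m ≤ n → a n ≤ a m)
  (halim : Tendsto a atTop (𝓝 1))
include hH0 hadec halim

lemma mul_abs_apply_le_one (hF : ∀ f ∈ ⋃ n, layer a H n, |f x| ≤ 1)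
    {h : StrongDual ℝ X} (hh : h ∈ H n) : a n * |h x| ≤ 1 := by
  obtain ⟨m, hm, hmn, hhm⟩ := exists_mem_diff_pred hH0 hh
  have hlayer := hF _ (mem_iUnion.2 ⟨m, smul_mem_layer hhm⟩)
  rw [smul_apply, smul_eq_mul, abs_mul,
    abs_of_nonneg (zero_le_one.trans (one_le_of_tendsto_of_antitone hadec halim hm))] at hlayer
  exact (mul_le_mul_of_nonneg_right (hadec m n hm hmn) (abs_nonneg _)).trans hlayer

lemma bddAbove_abs_apply (hF : ∀ f ∈ ⋃ n, layer a H n, |f x| ≤ 1) :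
    BddAbove ((fun h : StrongDual ℝ X => |h x|) '' ⋃ n, H n) := by
  refine ⟨1, forall_mem_image.2 fun h hh => ?_⟩
  obtain ⟨n, hn⟩ := mem_iUnion.1 hh
  obtain ⟨m, hm, -, hhm⟩ := exists_mem_diff_pred hH0 hn
  exact (le_mul_of_one_le_left (abs_nonneg _) (one_le_of_tendsto_of_antitone hadec halim hm)).trans
    (mul_abs_apply_le_one hH0 hadec halim hF hhm.1)

lemma abs_apply_lt_one_of_isWeakStarLimitPoint_layer (hstar : PropertyStar (H n))
    (hF : ∀ f ∈ ⋃ n, layer a H n, |f x| ≤ 1) (hg : IsWeakStarLimitPoint (layer a H n) g) :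
    |g x| < 1 := by
  have hn : 1 ≤ n := Nat.one_le_iff_ne_zero.2 fun h0 => by simpa [h0] using hg.nonempty
  have ha : 0 < a n := zero_lt_one.trans_le (one_le_of_tendsto_of_antitone hadec halim hn)
  obtain ⟨g', hg', hgg'⟩ := hg.exists_of_layer ha.ne'
  have hg'x := hstar.abs_apply_lt hg' (y := x) (inv_pos.2 ha) fun h hh =>
    ((le_inv_mul_iff₀ ha).2 (mul_abs_apply_le_one hH0 hadec halim hF hh)).trans_eq (mul_one _)
  calc |g x| = a n * |g' x| := by rw [hgg', abs_of_pos ha]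
    _ < a n * (a n)⁻¹ := mul_lt_mul_of_pos_left hg'x ha
    _ = 1 := mul_inv_cancel₀ ha.ne'

end Dual

theorem stmt1 {X : Type*} [NormedAddCommGroup X] [NormedSpace ℝ X]
    (H : ℕ → Set (StrongDual ℝ X)) (a : ℕ → ℝ) (F : Set (StrongDual ℝ X))
    (hH0 : H 0 = ∅)
    (hadec : ∀ m n : ℕ, 1 ≤ m → m ≤ n → a n ≤ a m)
    (halim : Tendsto a atTop (𝓝 1))
    (hF : F = (⋃ n, a n • (H n \ H (n - 1)) : Set (StrongDual ℝ X)) ∪ -(⋃ n, a n • (H n \ H (n - 1)) : Set (StrongDual ℝ X)))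
    (hstar : ∀ n, PropertyStar (H n))
    (hsep : ∀ x : X, x ≠ 0 →
      sSup ((fun h : StrongDual ℝ X => |h x|) '' ⋃ n, H n) <
        sSup ((fun f : StrongDual ℝ X => f x) '' F)) :
    PropertyStar F := by
  intro g hg x hx
  obtain rfl : F = ⋃ n, layer a H n := hF.trans (iUnion_layer a H).symm
  have hFx : ∀ f ∈ ⋃ n, layer a H n, |f x| ≤ 1 :=
    fun f => abs_apply_le_one_of_sSup_eq_one (fun _ => neg_mem_iUnion_layer) hx
  by_cases hlayer : ∃ n, IsWeakStarLimitPoint (layer a H n) g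
  · obtain ⟨n, hn⟩ := hlayer
    exact (le_abs_self _).trans_lt
      (abs_apply_lt_one_of_isWeakStarLimitPoint_layer hH0 hadec halim (hstar n) hFx hn)
  · have hx0 : x ≠ 0 := by
      rintro rfl
      have := Real.sSup_nonpos (s := (fun f : StrongDual ℝ X => f 0) '' ⋃ n, layer a H n)
        (forall_mem_image.2 fun f _ => (map_zero f).le)
      linarith
    have hbdd := bddAbove_abs_apply hH0 hadec halim hFx
    refine (apply_le_of_forall_not_isWeakStarLimitPoint_layer hadec halim hg (not_exists.1 hlayer)
      fun n h hh => le_csSup hbdd ⟨h, mem_iUnion.2 ⟨n, hh⟩, rfl⟩).trans_lt ?_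
    exact hx ▸ hsep x hx0

end
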